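/- arXiv:2602.09575 — 3 statements merged into one kernel-verified Lean document; each statement's English description precedes it below -/
import Mathlib

section
/- Fast-forwarding representation of a dissipative semigroup: Let L ∈ M_n(ℂ) be Hermitian positive semidefinite with positive semidefinite square root L^{1/2}, and let t ≥ 0. Then exp(−t L) = (1/(2√π)) ∫_{−∞}^{+∞} e^{−η²/4} exp(−i η √t · L^{1/2}) dη, where the integral is a Bochner integral of a matrix-valued function over ℝ. -/
/-!
Diagonalise `L = U diag(λ) U*`; by definition `L^{1/2} = U diag(√λ) U*`. The map
`v ↦ U diag(v) U*` is a continuous algebra homomorphism `ℂⁿ → M_n(ℂ)`, so it commutes with the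
exponential, with scalar multiplication and with the Bochner integral. Both sides therefore reduce
entrywise to the Fourier transform of a Gaussian,
`∫ e^{-η²/4} e^{-iηs} dη = 2√π e^{-s²}`, taken at `s = √(t λᵢ)`.
-/

open Matrix MeasureTheory NormedSpace
open scoped Matrix.Norms.L2Operator ComplexOrder

/-- The positive semidefinite square root of a positive semidefinite matrix
(the definition `Matrix.PosSemidef.sqrt` of the older Mathlib, restated verbatim). -/
noncomputable def Matrix.PosSemidef.sqrt {n 𝕜 : Type*} [Fintype n] [DecidableEq n] [RCLike 𝕜]
    {A : Matrix n n 𝕜} (hA : A.PosSemidef) : Matrix n n 𝕜 :=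
  hA.1.eigenvectorUnitary.1 * diagonal ((↑) ∘ (Real.sqrt ∘ hA.1.eigenvalues)) *
  (star hA.1.eigenvectorUnitary : Matrix n n 𝕜)

namespace Complex

theorem gaussian_mul_cexp_eq_cexp_quadratic (s : ℂ) (η : ℝ) :
    (Real.exp (-(η ^ 2 / 4)) : ℂ) * cexp (-(I * η * s)) =
      cexp (-(1 / 4) * η ^ 2 + -(I * s) * η + 0) := by
  rw [ofReal_exp, ← Complex.exp_add]
  push_cast
  ring_nf

theorem integrable_gaussian_mul_cexp (s : ℂ) :
    Integrable fun η : ℝ => (Real.exp (-(η ^ 2 / 4)) : ℂ) * cexp (-(I * η * s)) := by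
  simpa only [gaussian_mul_cexp_eq_cexp_quadratic] using
    integrable_cexp_quadratic (b := 1 / 4) (by norm_num) _ _

theorem integral_gaussian_mul_cexp (s : ℂ) :
    ∫ η : ℝ, (Real.exp (-(η ^ 2 / 4)) : ℂ) * cexp (-(I * η * s)) =
      2 * Real.sqrt Real.pi * cexp (-s ^ 2) := by
  simp only [gaussian_mul_cexp_eq_cexp_quadratic]
  rw [integral_cexp_quadratic (by norm_num)]
  have hsqrt : (Real.pi / -(-(1 / 4)) : ℂ) ^ (1 / 2 : ℂ) = 2 * Real.sqrt Real.pi := by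
    have h4 : Real.sqrt 4 = 2 := by
      rw [show (4 : ℝ) = 2 ^ 2 by norm_num, Real.sqrt_sq zero_le_two]
    rw [show (Real.pi / -(-(1 / 4)) : ℂ) = ((4 * Real.pi : ℝ) : ℂ) by push_cast; ring,
      show (1 / 2 : ℂ) = ((1 / 2 : ℝ) : ℂ) by norm_num, ← ofReal_cpow (by positivity),
      ← Real.sqrt_eq_rpow, Real.sqrt_mul zero_le_four, h4]
    push_cast
    rfl
  rw [hsqrt]
  congr 2
  ring_nf
  rw [I_sq]
  ring

end Complex

namespace Matrix

variable {m : Type*} [Fintype m] [DecidableEq m]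

noncomputable def conjDiagonalAlgHom (U : unitaryGroup m ℂ) : (m → ℂ) →ₐ[ℂ] Matrix m m ℂ :=
  (Unitary.conjStarAlgAut ℂ _ U).toAlgEquiv.toAlgHom.comp (diagonalAlgHom ℂ)

variable (U : unitaryGroup m ℂ)

theorem exp_conjDiagonalAlgHom (v : m → ℂ) :
    exp (conjDiagonalAlgHom U v) = conjDiagonalAlgHom U (fun i => Complex.exp (v i)) := by
  rw [← map_exp (conjDiagonalAlgHom U)
    (LinearMap.continuous_of_finiteDimensional (conjDiagonalAlgHom U).toLinearMap),
    Pi.exp_def, Complex.exp_eq_exp_ℂ]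

theorem integral_conjDiagonalAlgHom {α : Type*} [MeasurableSpace α] {μ : Measure α}
    {g : α → m → ℂ} (hg : ∀ i, Integrable (fun a => g a i) μ) :
    ∫ a, conjDiagonalAlgHom U (g a) ∂μ = conjDiagonalAlgHom U (fun i => ∫ a, g a i ∂μ) := by
  let Φ : (m → ℂ) →L[ℂ] Matrix m m ℂ :=
    LinearMap.toContinuousLinearMap (conjDiagonalAlgHom U).toLinearMap
  rw [show (fun i => ∫ a, g a i ∂μ) = ∫ a, g a ∂μ from funext fun i => (eval_integral hg i).symm]
  exact Φ.integral_comp_comm (Integrable.of_eval hg)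

end Matrix

/-- **Fast-forwarding representation of a dissipative semigroup.**
For a Hermitian positive semidefinite `L` with positive semidefinite square root
`L^{1/2}` and `t ≥ 0`,
`exp (-t L) = (1/(2√π)) ∫ e^{-η²/4} exp (-i η √t L^{1/2}) dη` (Bochner integral). -/
theorem fast_forwarding_dissipative {n : ℕ}
    (L : Matrix (Fin n) (Fin n) ℂ) (hL : L.PosSemidef) (t : ℝ) (ht : 0 ≤ t) :
    exp (-(t • L))
      = (1 / (2 * Real.sqrt Real.pi)) •
        ∫ η : ℝ, Real.exp (-(η ^ 2 / 4)) •
          exp (-((Complex.I * η * Real.sqrt t) • hL.sqrt)) := by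
  set Φ := conjDiagonalAlgHom hL.1.eigenvectorUnitary
  set ev := hL.1.eigenvalues
  have hL_diag : L = Φ (fun i => (ev i : ℂ)) := hL.1.spectral_theorem
  have hsqrt_diag : hL.sqrt = Φ (fun i => (Real.sqrt (ev i) : ℂ)) := rfl
  have lhs : exp (-(t • L)) = Φ (fun i => Complex.exp (-(t * ev i : ℝ))) := by
    rw [hL_diag, ← AlgHom.map_smul_of_tower, ← map_neg, exp_conjDiagonalAlgHom]
    congr 1
    funext i
    simp [Complex.real_smul]
  have integrand (η : ℝ) :
      Real.exp (-(η ^ 2 / 4)) • exp (-((Complex.I * η * Real.sqrt t) • hL.sqrt))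
        = Φ (fun i => (Real.exp (-(η ^ 2 / 4)) : ℂ) *
            Complex.exp (-(Complex.I * η * (Real.sqrt t * Real.sqrt (ev i) : ℝ)))) := by
    rw [hsqrt_diag, ← map_smul, ← map_neg, exp_conjDiagonalAlgHom, ← AlgHom.map_smul_of_tower]
    congr 1
    funext i
    simp [Complex.real_smul, mul_assoc]
  simp only [integrand]
  rw [integral_conjDiagonalAlgHom _ fun i => Complex.integrable_gaussian_mul_cexp _, lhs,
    ← AlgHom.map_smul_of_tower]
  congr 1
  funext i
  have hsq : (Real.sqrt t * Real.sqrt (ev i)) ^ 2 = t * ev i := by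
    rw [mul_pow, Real.sq_sqrt ht, Real.sq_sqrt (hL.eigenvalues_nonneg i)]
  rw [Pi.smul_apply, Complex.integral_gaussian_mul_cexp, ← Complex.ofReal_pow, hsq,
    Complex.real_smul]
  push_cast
  field_simp
end

section
/- LCHS kernel identity for positive semidefinite generators: Let γ : ℝ → ℂ be Lebesgue integrable and suppose that for every real x ≥ 0, ∫_{−∞}^{+∞} γ(η) e^{−iηx} dη = e^{−x}. Then for every Hermitian positive semidefinite matrix L ∈ M_n(ℂ) and every t ≥ 0, ∫_{−∞}^{+∞} γ(η) · exp(−i η t L) dη = exp(−t L), where the left side is a Bochner integral of a matrix-valued function over ℝ. -/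
open Matrix MeasureTheory NormedSpace
open scoped Matrix.Norms.L2Operator ComplexOrder

/-!
Diagonalize `L = U D U⋆` with `U` unitary and `D` diagonal with entries `dₖ ≥ 0`. Conjugation
by `U` is a continuous algebra automorphism, so it commutes with `exp` and with the Bochner
integral; this reduces the identity to `D`, where both sides are diagonal and the `k`-th entry
is the scalar hypothesis at `x = t dₖ`.
-/

section

variable {X : Type*} [MeasurableSpace X] {μ : Measure X} {n : Type*} [Fintype n] [DecidableEq n]

theorem Matrix.integral_diagonal {f : X → n → ℂ} (hf : ∀ i, Integrable (f · i) μ) :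
    ∫ x, diagonal (f x) ∂μ = diagonal fun i ↦ ∫ x, f x i ∂μ := by
  rw [← funext (eval_integral hf)]
  exact (diagonalLinearMap n ℂ ℂ).toContinuousLinearMap.integral_comp_comm
    (Integrable.of_eval hf)

theorem Matrix.exp_smul_diagonal (c : ℂ) (v : n → ℂ) :
    exp (c • diagonal v) = diagonal fun i ↦ Complex.exp (c * v i) := by
  rw [← diagonal_smul, exp_diagonal]
  congr 1
  ext i
  simp [Pi.coe_exp, Complex.exp_eq_exp_ℂ]

end

theorem integrable_mul_exp_neg_I_mul {μ : Measure ℝ} {γ : ℝ → ℂ} (hγ : Integrable γ μ) (x : ℝ) :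
    Integrable (fun η : ℝ ↦ γ η * Complex.exp (-(Complex.I * η * x))) μ := by
  refine hγ.mul_bdd (c := 1) (by fun_prop) (ae_of_all _ fun η ↦ ?_)
  rw [Complex.norm_exp]
  simp

section

variable {n : Type*} [Fintype n] [DecidableEq n] {μ : Measure ℝ} {γ : ℝ → ℂ}

theorem integral_smul_exp_diagonal (hγ : Integrable γ μ)
    (hker : ∀ x : ℝ, 0 ≤ x →
      (∫ η : ℝ, γ η * Complex.exp (-(Complex.I * η * x)) ∂μ) = Real.exp (-x))
    {d : n → ℝ} (hd : ∀ i, 0 ≤ d i) {t : ℝ} (ht : 0 ≤ t) :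
    ∫ η : ℝ, γ η • exp (-((Complex.I * η * t) • diagonal fun i ↦ (d i : ℂ))) ∂μ =
      exp (-(t • diagonal fun i ↦ (d i : ℂ))) := by
  have integrand (η : ℝ) : γ η • exp (-((Complex.I * η * t) • diagonal fun i ↦ (d i : ℂ))) =
      diagonal fun i ↦ γ η * Complex.exp (-(Complex.I * η * ↑(t * d i))) := by
    rw [← neg_smul, exp_smul_diagonal, ← diagonal_smul]
    congr 1
    ext i
    simp only [Pi.smul_apply, smul_eq_mul]
    push_cast
    ring_nf
  have rhs : -(t • diagonal fun i ↦ (d i : ℂ)) = (-t : ℂ) • diagonal fun i ↦ (d i : ℂ) := by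
    rw [← neg_smul, ← Complex.coe_smul, Complex.ofReal_neg]
  simp_rw [integrand]
  rw [integral_diagonal fun i ↦ integrable_mul_exp_neg_I_mul hγ _, rhs, exp_smul_diagonal]
  congr 1
  ext i
  rw [hker _ (mul_nonneg ht (hd i))]
  push_cast
  ring_nf

end

/-- **LCHS kernel identity for positive semidefinite generators.**
If an integrable kernel `γ` satisfies `∫ γ(η) e^{-iηx} dη = e^{-x}` for all `x ≥ 0`,
then for every Hermitian positive semidefinite `L` and `t ≥ 0`,
`∫ γ(η) exp (-i η t L) dη = exp (-t L)` (Bochner integral). -/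
theorem LCHS_kernel_identity {n : ℕ}
    (γ : ℝ → ℂ) (hγ : Integrable γ)
    (hker : ∀ x : ℝ, 0 ≤ x →
      (∫ η : ℝ, γ η * Complex.exp (-(Complex.I * η * x))) = Real.exp (-x))
    (L : Matrix (Fin n) (Fin n) ℂ) (hL : L.PosSemidef) (t : ℝ) (ht : 0 ≤ t) :
    (∫ η : ℝ, γ η • exp (-((Complex.I * η * t) • L))) = exp (-(t • L)) := by
  set U := hL.isHermitian.eigenvectorUnitary
  set Φ := Unitary.conjStarAlgAut ℂ _ U
  have exp_conj (A : Matrix (Fin n) (Fin n) ℂ) : exp (Φ A) = Φ (exp A) :=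
    Matrix.exp_units_conj (Unitary.toUnits U) A
  set D : Matrix (Fin n) (Fin n) ℂ := diagonal fun i ↦ (hL.isHermitian.eigenvalues i : ℂ)
  have hLD : L = Φ D := hL.isHermitian.spectral_theorem
  calc (∫ η : ℝ, γ η • exp (-((Complex.I * η * t) • L)))
      = ∫ η : ℝ, Φ.toAlgEquiv.toLinearEquiv.toContinuousLinearEquiv
          (γ η • exp (-((Complex.I * η * t) • D))) := by
        congr 1 with η
        rw [hLD, ← map_smul, ← map_neg, exp_conj, ← map_smul]
        rfl
    _ = Φ (exp (-(t • D))) := by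
        rw [ContinuousLinearEquiv.integral_comp_comm,
          integral_smul_exp_diagonal hγ hker hL.eigenvalues_nonneg ht]
        rfl
    _ = exp (-(t • L)) := by
        rw [← Complex.coe_smul, ← Complex.coe_smul, hLD, ← exp_conj, map_neg, map_smul]
end

section
/- Non-optimality of LCHS (impossibility of compactly supported kernels): There is no function γ : ℝ → ℂ that is square integrable and has compact support and satisfies ∫_{−∞}^{+∞} γ(η) e^{−iηx} dη = e^{−x} for every real x ≥ 0. -/
/-!
Since `γ` is integrable with compact support, `F z = ∫ γ η e^{-iηz} dη` extends to an entire
function of `z`. It agrees with `e^{-z}` on `[0, ∞)`, hence everywhere by the identity theorem.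
But `F` is bounded on the real line by `∫ ‖γ‖`, while `e^{-x}` is unbounded as `x → -∞`.
-/

open MeasureTheory Complex Filter Topology Metric

theorem MeasureTheory.MemLp.integrable_of_hasCompactSupport {X E : Type*} [TopologicalSpace X]
    [MeasurableSpace X] [NormedAddCommGroup E] {μ : Measure X} [IsFiniteMeasureOnCompacts μ]
    {p : ENNReal} {f : X → E} (hf : MemLp f p μ) (hc : HasCompactSupport f) (hp : 1 ≤ p) :
    Integrable f μ :=
  memLp_one_iff_integrable.mp <| hf.mono_exponent_of_measure_support_ne_top
    (fun _ hx ↦ image_eq_zero_of_notMem_tsupport hx) hc.measure_lt_top.ne hp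

noncomputable def fourierLaplace (γ : ℝ → ℂ) (z : ℂ) : ℂ :=
  ∫ η : ℝ, γ η * cexp (-(I * η * z))

theorem norm_cexp_neg_I_mul_le {η R r : ℝ} {z : ℂ} (hη : |η| ≤ R) (hz : ‖z‖ ≤ r) :
    ‖cexp (-(I * η * z))‖ ≤ Real.exp (R * r) := by
  have hre : (-(I * η * z)).re = η * z.im := by simp
  rw [norm_exp, hre, Real.exp_le_exp]
  calc η * z.im ≤ |η| * |z.im| := by rw [← abs_mul]; exact le_abs_self _
    _ ≤ R * r :=
      mul_le_mul hη ((abs_im_le_norm z).trans hz) (abs_nonneg _) ((abs_nonneg η).trans hη)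

theorem norm_fourierLaplace_ofReal_le (γ : ℝ → ℂ) (x : ℝ) :
    ‖fourierLaplace γ x‖ ≤ ∫ η, ‖γ η‖ := by
  refine (norm_integral_le_integral_norm _).trans_eq (integral_congr_ae (.of_forall fun η ↦ ?_))
  simp [norm_exp]

theorem differentiable_fourierLaplace {γ : ℝ → ℂ} (hγ : Integrable γ) (hc : HasCompactSupport γ) :
    Differentiable ℂ (fourierLaplace γ) := by
  obtain ⟨R, hR⟩ := hc.isBounded.subset_closedBall 0
  have hsupp : ∀ η, γ η ≠ 0 → |η| ≤ R := fun η h ↦ by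
    simpa [Real.dist_eq] using hR (subset_tsupport γ h)
  intro z₀
  have hmeas : ∀ z : ℂ, AEStronglyMeasurable (fun η : ℝ ↦ γ η * cexp (-(I * η * z))) volume :=
    fun z ↦ hγ.aestronglyMeasurable.mul (by fun_prop : Continuous fun η : ℝ ↦
      cexp (-(I * η * z))).aestronglyMeasurable
  have hint : Integrable (fun η : ℝ ↦ γ η * cexp (-(I * η * z₀))) := by
    refine (hγ.norm.mul_const (Real.exp (R * ‖z₀‖))).mono' (hmeas z₀) (.of_forall fun η ↦ ?_)
    rcases eq_or_ne (γ η) 0 with h | h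
    · simp [h]
    rw [norm_mul]
    gcongr
    exact norm_cexp_neg_I_mul_le (hsupp η h) le_rfl
  have hderiv : ∀ (η : ℝ) (z : ℂ), HasDerivAt (fun z ↦ γ η * cexp (-(I * η * z)))
      (γ η * (-(I * η) * cexp (-(I * η * z)))) z := fun η z ↦ by
    simpa [mul_comm] using ((hasDerivAt_id z).const_mul (I * η)).neg.cexp.const_mul (γ η)
  have hbound : ∀ η : ℝ, ∀ z ∈ ball z₀ 1,
      ‖γ η * (-(I * η) * cexp (-(I * η * z)))‖ ≤ ‖γ η‖ * (R * Real.exp (R * (‖z₀‖ + 1))) := by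
    intro η z hz
    rcases eq_or_ne (γ η) 0 with h | h
    · simp [h]
    have hη := hsupp η h
    have hz' : ‖z‖ ≤ ‖z₀‖ + 1 := by
      rw [mem_ball, dist_eq_norm] at hz
      linarith [norm_le_norm_add_norm_sub' z z₀]
    rw [norm_mul, norm_mul, norm_neg, norm_mul, norm_I, one_mul, norm_real, Real.norm_eq_abs]
    gcongr ‖γ η‖ * ?_
    exact mul_le_mul hη (norm_cexp_neg_I_mul_le hη hz') (norm_nonneg _) ((abs_nonneg η).trans hη)
  exact (hasDerivAt_integral_of_dominated_loc_of_deriv_le (ball_mem_nhds z₀ one_pos)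
    (.of_forall hmeas) hint (by fun_prop) (.of_forall hbound) (hγ.norm.mul_const _)
    (.of_forall fun η z _ ↦ hderiv η z)).2.differentiableAt

theorem Differentiable.eq_of_eq_ofReal_of_nonneg {E : Type*} [NormedAddCommGroup E]
    [NormedSpace ℂ E] [CompleteSpace E] {f g : ℂ → E} (hf : Differentiable ℂ f)
    (hg : Differentiable ℂ g) (hfg : ∀ x : ℝ, 0 ≤ x → f x = g x) : f = g := by
  refine (analyticOnNhd_univ_iff_differentiable.mpr hf).eq_of_frequently_eq
    (analyticOnNhd_univ_iff_differentiable.mpr hg) (z₀ := 0) ?_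
  have hreal : Tendsto ((↑) : ℝ → ℂ) (𝓝[>] 0) (𝓝[≠] 0) :=
    continuous_ofReal.continuousWithinAt.tendsto_nhdsWithin fun x hx ↦ by
      simpa using ne_of_gt hx
  exact hreal.frequently (Eventually.frequently
    (eventually_nhdsWithin_of_forall fun x hx ↦ hfg x (le_of_lt hx)))

/-- **Non-optimality of LCHS: no compactly supported square-integrable kernel.**
There is no `γ ∈ L²(ℝ, ℂ)` with compact support such that
`∫ γ(η) e^{-iηx} dη = e^{-x}` for every `x ≥ 0`. -/
theorem no_compact_LCHS_kernel :
    ¬ ∃ γ : ℝ → ℂ, MemLp γ 2 (volume : Measure ℝ) ∧ HasCompactSupport γ ∧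
      ∀ x : ℝ, 0 ≤ x →
        (∫ η : ℝ, γ η * Complex.exp (-(Complex.I * η * x))) = Real.exp (-x) := by
  rintro ⟨γ, hγ2, hγc, hγ⟩
  have hγ1 : Integrable γ := hγ2.integrable_of_hasCompactSupport hγc one_le_two
  have hF : fourierLaplace γ = fun z ↦ cexp (-z) :=
    (differentiable_fourierLaplace hγ1 hγc).eq_of_eq_ofReal_of_nonneg
      (differentiable_exp.comp differentiable_neg) fun x hx ↦ by
        simpa [fourierLaplace] using hγ x hx
  set C := ∫ η, ‖γ η‖
  have hexp_le : Real.exp C ≤ C := by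
    simpa [hF, norm_exp] using norm_fourierLaplace_ofReal_le γ (-C)
  linarith [Real.add_one_le_exp C]
end
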